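/- (Summation by parts for difference operators.) Let F : Λ → ℂ be rapidly decreasing (for all N, |F(α)| ≤ C_N/(2|α|+a)^N) and G : Λ → ℂ bounded. Then Σ_{α∈Λ} d_α F(α) D⁺G(α) = −Σ_{α∈Λ} d_α (D⁻ + a)F(α) G(α), where both series converge absolutely. -/

import Mathlib

/-!
Write `H(α, β) = d_α F(α) (d_β / d_α) c(β, α) G(β)` and `D(α) = d_α (|α| + a) F(α) G(α)`.
The left summand is `Σ_β H(α, β) - D(α)` and the right one is `D(α) - Σ_β H(β, α)`, both inner
sums being finite because `c` only links adjacent levels. The normalisation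
`Σ_β (d_β / d_α) c(β, α) = |α| + a` bounds `Σ_β |H(α, β)|` by `sup |G| · d_α (|α| + a) |F(α)|`,
which is summable: on level `m` the total weight `Σ d_α` grows at most like `(2m + a)^(a - 1)`,
while `(|α| + a) |F(α)|` decays like `(2m + a)^(-(a + 1))`. So `H` is absolutely summable and
exchanging the order of summation turns the left-hand side into minus the right-hand side.
-/

open Function

theorem summable_of_finsum_fiber_le {Λ ι : Type*} {f : Λ → ℝ} {g : ι → ℝ}
    (deg : Λ → ι) (hf : 0 ≤ f) (hfin : ∀ m, {α | deg α = m}.Finite) (hg : Summable g)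
    (hle : ∀ m, ∑ᶠ α ∈ {α | deg α = m}, f α ≤ g m) : Summable f := by
  refine (summable_partition hf (s := fun m => {α | deg α = m})
    fun α => ⟨deg α, rfl, fun _ h => h.symm⟩).2 ⟨fun m => (hfin m).summable f,
      hg.of_nonneg_of_le (fun m => tsum_nonneg fun _ => hf _) fun m => ?_⟩
  rw [tsum_subtype, tsum_eq_finsum ((hfin m).subset Set.support_indicator_subset),
    ← finsum_mem_def]
  exact hle m

theorem tsum_tsum_sub_eq_neg_tsum_sub_tsum {Λ E : Type*} [NormedAddCommGroup E]
    [CompleteSpace E] {H : Λ → Λ → E} {D : Λ → E} (hH : Summable (uncurry H)) (hD : Summable D) :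
    Summable (fun α => ∑' β, H α β - D α) ∧ Summable (fun α => D α - ∑' β, H β α) ∧
      ∑' α, (∑' β, H α β - D α) = -∑' α, (D α - ∑' β, H β α) := by
  have hrow : Summable fun α => ∑' β, H α β := hH.prod
  have hcol : Summable fun α => ∑' β, H β α := hH.prod_symm.prod
  refine ⟨hrow.sub hD, hD.sub hcol, ?_⟩
  rw [hrow.tsum_sub hD, hD.tsum_sub hcol, hH.tsum_comm]
  abel

theorem pow_mul_decay_le_inv_sq (m : ℕ) {a : ℕ} (ha : 1 ≤ a) {C : ℝ} (hC : 0 ≤ C) :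
    (((m + a - 1) ^ (a - 1) : ℕ) : ℝ) * ((m + a) * (C / (2 * m + a) ^ (a + 2)))
      ≤ C / (m + 1) ^ 2 := by
  have hlevel : (((m + a - 1) ^ (a - 1) : ℕ) : ℝ) ≤ (2 * m + a : ℝ) ^ (a - 1) := by
    have : (m + a - 1) ^ (a - 1) ≤ (2 * m + a) ^ (a - 1) := Nat.pow_le_pow_left (by omega) _
    exact_mod_cast this
  have ha' : (1 : ℝ) ≤ a := by exact_mod_cast ha
  set x : ℝ := 2 * m + a
  have hx : 0 < x := by positivity
  calc (((m + a - 1) ^ (a - 1) : ℕ) : ℝ) * ((m + a) * (C / x ^ (a + 2)))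
      ≤ x ^ (a - 1) * (x * (C / x ^ (a + 2))) := by
        gcongr
        linarith [(m.cast_nonneg : (0 : ℝ) ≤ m)]
    _ = C / x ^ 2 := by
        rw [show a + 2 = a - 1 + 1 + 2 by omega, pow_add, pow_add]
        field_simp
    _ ≤ C / (m + 1) ^ 2 := by
        gcongr
        linarith [(m.cast_nonneg : (0 : ℝ) ≤ m)]

section GradedSums

variable {Λ : Type*} {deg : Λ → ℕ} {a : ℕ} {d : Λ → ℝ} {c : Λ → Λ → ℝ}

theorem summable_mul_deg_add_mul_of_decay (ha : 1 ≤ a)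
    (hfin : ∀ m : ℕ, {α : Λ | deg α = m}.Finite) (hd : ∀ α, 0 ≤ d α)
    (hlevel : ∀ m : ℕ, (∑ᶠ α ∈ {α : Λ | deg α = m}, d α) ≤ ((m + a - 1) ^ (a - 1) : ℕ))
    {u : Λ → ℝ} (hu : 0 ≤ u) {C : ℝ} (hC : ∀ α, u α ≤ C / (2 * deg α + a) ^ (a + 2)) :
    Summable fun α => d α * ((deg α + a) * u α) := by
  set C' := max C 0
  have hC' (α : Λ) : u α ≤ C' / (2 * deg α + a) ^ (a + 2) :=
    (hC α).trans (by gcongr; exact le_max_left _ _)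
  have hg : Summable fun m : ℕ => C' / ((m : ℝ) + 1) ^ 2 := by
    refine (((summable_nat_add_iff 1).2 (Real.summable_one_div_nat_pow.2 one_lt_two)).mul_left
      C').congr fun m => ?_
    push_cast
    ring
  refine summable_of_finsum_fiber_le deg
    (fun α => mul_nonneg (hd α) (mul_nonneg (by positivity) (hu α))) hfin hg fun m => ?_
  have hlevel_m := hlevel m
  rw [finsum_mem_eq_finite_toFinset_sum _ (hfin m)] at hlevel_m ⊢
  calc ∑ α ∈ (hfin m).toFinset, d α * ((deg α + a) * u α)
      ≤ ∑ α ∈ (hfin m).toFinset, d α * ((m + a) * (C' / (2 * m + a) ^ (a + 2))) := by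
        refine Finset.sum_le_sum fun α hα => ?_
        have hdeg : deg α = m := (hfin m).mem_toFinset.1 hα
        have hα' := hC' α
        rw [hdeg] at hα' ⊢
        exact mul_le_mul_of_nonneg_left (by gcongr) (hd α)
    _ = (∑ α ∈ (hfin m).toFinset, d α) * ((m + a) * (C' / (2 * m + a) ^ (a + 2))) :=
        (Finset.sum_mul ..).symm
    _ ≤ (((m + a - 1) ^ (a - 1) : ℕ) : ℝ) * ((m + a) * (C' / (2 * m + a) ^ (a + 2))) := by
        gcongr
    _ ≤ C' / (m + 1) ^ 2 := pow_mul_decay_le_inv_sq m ha (le_max_right _ _)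

theorem finite_support_raising (hfin : ∀ m : ℕ, {α : Λ | deg α = m}.Finite)
    (hc0 : ∀ x y, c x y ≠ 0 → deg x = deg y + 1) (α : Λ) : (support fun β => c β α).Finite :=
  (hfin (deg α + 1)).subset fun β => hc0 β α

theorem finite_support_lowering (hfin : ∀ m : ℕ, {α : Λ | deg α = m}.Finite)
    (hc0 : ∀ x y, c x y ≠ 0 → deg x = deg y + 1) (α : Λ) : (support (c α)).Finite :=
  (hfin (deg α - 1)).subset fun β hβ => by
    have := hc0 α β hβ
    show deg β = deg α - 1
    omega

theorem mul_raising_sub_eq_tsum_sub {α : Λ} (hfs : (support fun β => c β α).Finite)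
    (F G : Λ → ℂ) (K : ℂ) :
    (d α : ℂ) * F α * ((∑ᶠ β, ((d β / d α * c β α : ℝ) : ℂ) * G β) - K * G α)
      = ∑' β, (d α : ℂ) * F α * ((d β / d α * c β α : ℝ) : ℂ) * G β
        - d α * F α * K * G α := by
  rw [← tsum_eq_finsum (L := .unconditional Λ)
    (hfs.subset (support_subset_iff'.2 fun β hβ => by simp [notMem_support.1 hβ])),
    mul_sub, ← tsum_mul_left]
  simp only [mul_assoc]

theorem lowering_add_mul_eq_sub_tsum (hd : ∀ α, d α ≠ 0) {α : Λ}
    (hfs : (support (c α)).Finite) (F G : Λ → ℂ) :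
    (d α : ℂ) * ((((deg α : ℕ) : ℂ) * F α - ∑ᶠ β, ((c α β : ℝ) : ℂ) * F β) + (a : ℂ) * F α)
      * G α
      = d α * F α * ((deg α + a : ℕ) : ℂ) * G α
        - ∑' β, (d β : ℂ) * F β * ((d α / d β * c α β : ℝ) : ℂ) * G α := by
  have hterm (β : Λ) : (d β : ℂ) * F β * ((d α / d β * c α β : ℝ) : ℂ) * G α
      = d α * G α * ((c α β : ℝ) * F β) := by
    have : (d β : ℂ) ≠ 0 := by exact_mod_cast hd β
    push_cast
    field_simp
  rw [← tsum_eq_finsum (L := .unconditional Λ)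
    (hfs.subset (support_subset_iff'.2 fun β hβ => by simp [notMem_support.1 hβ])),
    tsum_congr hterm, tsum_mul_left]
  push_cast
  ring

theorem summable_raising_term (hd : ∀ α, 0 < d α) (hcnn : ∀ x y, 0 ≤ c x y)
    (hfs : ∀ α, (support fun β => c β α).Finite)
    (hplus : ∀ α, (∑ᶠ β, (d β / d α) * c β α) = ((deg α + a : ℕ) : ℝ))
    {F G : Λ → ℂ} {M : ℝ} (hM : ∀ β, ‖G β‖ ≤ M)
    (hw : Summable fun α => d α * ((deg α + a) * ‖F α‖)) :
    Summable (uncurry fun α β => (d α : ℂ) * F α * ((d β / d α * c β α : ℝ) : ℂ) * G β) := by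
  have hcoeff (α β : Λ) : 0 ≤ d β / d α * c β α :=
    mul_nonneg (div_nonneg (hd β).le (hd α).le) (hcnn β α)
  have hfs' (α : Λ) : HasFiniteSupport fun β => d β / d α * c β α :=
    (hfs α).subset (support_subset_iff'.2 fun β hβ => by simp [notMem_support.1 hβ])
  have hnorm (α β : Λ) : ‖(d α : ℂ) * F α * ((d β / d α * c β α : ℝ) : ℂ) * G β‖
      ≤ d α * ‖F α‖ * M * (d β / d α * c β α) := by
    rw [norm_mul, norm_mul, norm_mul, Complex.norm_real, Complex.norm_real,
      Real.norm_of_nonneg (hd α).le, Real.norm_of_nonneg (hcoeff α β), mul_right_comm _ M]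
    exact mul_le_mul_of_nonneg_left (hM β)
      (mul_nonneg (mul_nonneg (hd α).le (norm_nonneg _)) (hcoeff α β))
  have hrow (α : Λ) :
      Summable fun β => ‖(d α : ℂ) * F α * ((d β / d α * c β α : ℝ) : ℂ) * G β‖ :=
    ((summable_of_hasFiniteSupport (hfs' α)).mul_left _).of_nonneg_of_le
      (fun _ => norm_nonneg _) (hnorm α)
  refine Summable.of_norm ((summable_prod_of_nonneg fun _ => norm_nonneg _).2 ⟨hrow, ?_⟩)
  refine (hw.mul_left M).of_nonneg_of_le (fun α => tsum_nonneg fun _ => norm_nonneg _)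
    fun α => ?_
  calc ∑' β, ‖(d α : ℂ) * F α * ((d β / d α * c β α : ℝ) : ℂ) * G β‖
      ≤ ∑' β, d α * ‖F α‖ * M * (d β / d α * c β α) :=
        (hrow α).tsum_le_tsum (hnorm α) ((summable_of_hasFiniteSupport (hfs' α)).mul_left _)
    _ = M * (d α * ((deg α + a) * ‖F α‖)) := by
        rw [tsum_mul_left, tsum_eq_finsum (hfs' α), hplus]
        push_cast
        ring

theorem summable_diagonal_term (hd : ∀ α, 0 < d α) {F G : Λ → ℂ} {M : ℝ}
    (hM : ∀ β, ‖G β‖ ≤ M) (hw : Summable fun α => d α * ((deg α + a) * ‖F α‖)) :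
    Summable fun α => (d α : ℂ) * F α * ((deg α + a : ℕ) : ℂ) * G α := by
  refine Summable.of_norm_bounded (hw.mul_left M) fun α => ?_
  rw [norm_mul, norm_mul, norm_mul, Complex.norm_real, Real.norm_of_nonneg (hd α).le,
    Complex.norm_natCast, mul_comm M]
  push_cast
  calc d α * ‖F α‖ * (deg α + a) * ‖G α‖
      = d α * ((deg α + a) * ‖F α‖) * ‖G α‖ := by ring
    _ ≤ d α * ((deg α + a) * ‖F α‖) * M :=
        mul_le_mul_of_nonneg_left (hM α) (by have := hd α; positivity)

end GradedSums

theorem stmt14_general {Λ : Type*} (deg : Λ → ℕ) (a : ℕ) (ha : 1 ≤ a)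
    (hfin : ∀ m : ℕ, {α : Λ | deg α = m}.Finite)
    (d : Λ → ℝ) (hd : ∀ α, 0 < d α)
    (hlevel : ∀ m : ℕ,
      (∑ᶠ α ∈ {α : Λ | deg α = m}, d α) ≤ ((m + a - 1) ^ (a - 1) : ℕ))
    (c : Λ → Λ → ℝ) (hcnn : ∀ x y, 0 ≤ c x y)
    (hc0 : ∀ x y, c x y ≠ 0 → deg x = deg y + 1)
    (hplus : ∀ α, (∑ᶠ β, (d β / d α) * c β α) = ((deg α + a : ℕ) : ℝ))
    (F G : Λ → ℂ)
    (hF : ∀ N : ℕ, ∃ C : ℝ, ∀ α, ‖F α‖ ≤ C / (2 * deg α + a) ^ N)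
    (hG : ∃ M : ℝ, ∀ α, ‖G α‖ ≤ M) :
    Summable (fun α => (d α : ℂ) * F α *
      ((∑ᶠ β, ((d β / d α * c β α : ℝ) : ℂ) * G β) - ((deg α + a : ℕ) : ℂ) * G α)) ∧
    Summable (fun α => (d α : ℂ) *
      ((((deg α : ℕ) : ℂ) * F α - ∑ᶠ β, ((c α β : ℝ) : ℂ) * F β) + (a : ℂ) * F α)
      * G α) ∧
    (∑' α, (d α : ℂ) * F α *
      ((∑ᶠ β, ((d β / d α * c β α : ℝ) : ℂ) * G β) - ((deg α + a : ℕ) : ℂ) * G α))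
    = - ∑' α, (d α : ℂ) *
      ((((deg α : ℕ) : ℂ) * F α - ∑ᶠ β, ((c α β : ℝ) : ℂ) * F β) + (a : ℂ) * F α)
      * G α := by
  obtain ⟨M, hM⟩ := hG
  obtain ⟨C, hC⟩ := hF (a + 2)
  have hw : Summable fun α => d α * ((deg α + a) * ‖F α‖) :=
    summable_mul_deg_add_mul_of_decay ha hfin (fun α => (hd α).le) hlevel
      (fun α => norm_nonneg (F α)) hC
  have hH := summable_raising_term hd hcnn (finite_support_raising hfin hc0) hplus hM hw
  have hD := summable_diagonal_term hd hM hw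
  simp only [mul_raising_sub_eq_tsum_sub (finite_support_raising hfin hc0 _),
    lowering_add_mul_eq_sub_tsum (fun α => (hd α).ne') (finite_support_lowering hfin hc0 _)]
  exact tsum_tsum_sub_eq_neg_tsum_sub_tsum hH hD

/-- Summation by parts for the difference operators: if `F` is rapidly decreasing
and `G` is bounded, then `Σ_α d_α F(α) D⁺G(α) = −Σ_α d_α (D⁻ + a)F(α) G(α)`,
both series being absolutely convergent (summable). -/
theorem stmt14 {Λ : Type*} [Countable Λ] (deg : Λ → ℕ) (a : ℕ) (ha : 1 ≤ a)
    (hfin : ∀ m : ℕ, {α : Λ | deg α = m}.Finite)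
    (d : Λ → ℝ) (hd : ∀ α, 0 < d α)
    (hlevel : ∀ m : ℕ,
      (∑ᶠ α ∈ {α : Λ | deg α = m}, d α) ≤ ((m + a - 1) ^ (a - 1) : ℕ))
    (c : Λ → Λ → ℝ) (hcnn : ∀ x y, 0 ≤ c x y)
    (hc0 : ∀ x y, c x y ≠ 0 → deg x = deg y + 1)
    (hplus : ∀ α, (∑ᶠ β, (d β / d α) * c β α) = ((deg α + a : ℕ) : ℝ))
    (hminus : ∀ α, (∑ᶠ β, c α β) = ((deg α : ℕ) : ℝ))
    (F G : Λ → ℂ)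
    (hF : ∀ N : ℕ, ∃ C : ℝ, ∀ α, ‖F α‖ ≤ C / (2 * deg α + a) ^ N)
    (hG : ∃ M : ℝ, ∀ α, ‖G α‖ ≤ M) :
    Summable (fun α => (d α : ℂ) * F α *
      ((∑ᶠ β, ((d β / d α * c β α : ℝ) : ℂ) * G β) - ((deg α + a : ℕ) : ℂ) * G α)) ∧
    Summable (fun α => (d α : ℂ) *
      ((((deg α : ℕ) : ℂ) * F α - ∑ᶠ β, ((c α β : ℝ) : ℂ) * F β) + (a : ℂ) * F α)
      * G α) ∧
    (∑' α, (d α : ℂ) * F α *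
      ((∑ᶠ β, ((d β / d α * c β α : ℝ) : ℂ) * G β) - ((deg α + a : ℕ) : ℂ) * G α))
    = - ∑' α, (d α : ℂ) *
      ((((deg α : ℕ) : ℂ) * F α - ∑ᶠ β, ((c α β : ℝ) : ℂ) * F β) + (a : ℂ) * F α)
      * G α :=
  stmt14_general deg a ha hfin d hd hlevel c hcnn hc0 hplus F G hF hG
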